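/- Let Y ∼ Hypergeometric(n, d, s) be the number of non-trivial elements in a chunk of size s, and let f(x) = x·e^{εx} with ε > 0. Then E[f(Y)] ≤ e^ε·(d/n)·s·(1 + (e^ε − 1)·(d/n))^{s−1}. -/

import Mathlib

/-!
Size-biasing, `k * C(d, k) = d * C(d - 1, k - 1)`, turns `E[Y x^Y]` (with `x = e^ε`) into
`x (d / n) s E[x^Y']` for `Y' ∼ Hypergeometric(n - 1, d - 1, s - 1)`. Writing
`x^j = ∑ i, C(j, i) (x - 1)^i` expresses this moment generating function through the factorial
moments `E[C(Y', i)] = C(s - 1, i) C(d - 1, i) / C(n - 1, i)`, and these are at most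
`C(s - 1, i) (d / n)^i`, the factorial moments of `Binomial(s - 1, d / n)`, whose moment generating
function is `(1 + (x - 1) d / n)^(s - 1)`.
-/

open Finset

namespace Nat

theorem descFactorial_mul_pow_le_descFactorial_mul_pow {D N : ℕ} (hDN : D ≤ N) (i : ℕ) :
    D.descFactorial i * N ^ i ≤ N.descFactorial i * D ^ i := by
  induction i with
  | zero => simp
  | succ i ih =>
    have hstep : (D - i) * N ≤ (N - i) * D := by
      rw [Nat.sub_mul, Nat.sub_mul, Nat.mul_comm D N]
      exact Nat.sub_le_sub_left (Nat.mul_le_mul_left i hDN) _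
    calc D.descFactorial (i + 1) * N ^ (i + 1)
        = ((D - i) * N) * (D.descFactorial i * N ^ i) := by rw [descFactorial_succ]; ring
      _ ≤ ((N - i) * D) * (N.descFactorial i * D ^ i) := Nat.mul_le_mul hstep ih
      _ = N.descFactorial (i + 1) * D ^ (i + 1) := by rw [descFactorial_succ]; ring

theorem choose_le_choose_mul_div_pow {K : Type*} [Field K] [LinearOrder K]
    [IsStrictOrderedRing K] {D N : ℕ} (hDN : D ≤ N) (i : ℕ) :
    (D.choose i : K) ≤ N.choose i * ((D : K) / N) ^ i := by
  obtain rfl | hN := N.eq_zero_or_pos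
  · obtain rfl : D = 0 := Nat.le_zero.mp hDN
    cases i <;> simp
  have h := descFactorial_mul_pow_le_descFactorial_mul_pow hDN i
  rw [descFactorial_eq_factorial_mul_choose, descFactorial_eq_factorial_mul_choose,
    Nat.mul_assoc, Nat.mul_assoc] at h
  rw [div_pow, ← mul_div_assoc, le_div_iff₀ (by positivity)]
  exact_mod_cast Nat.le_of_mul_le_mul_left h (factorial_pos i)

theorem add_one_mul_choose_add_one (d k : ℕ) :
    (k + 1) * d.choose (k + 1) = d * (d - 1).choose k := by
  cases d with
  | zero => simp
  | succ d => rw [Nat.add_sub_cancel, add_one_mul_choose_eq, Nat.mul_comm]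

theorem sum_range_choose_mul_choose_mul_choose (a b m i : ℕ) (him : i ≤ m) :
    ∑ j ∈ range (m + 1), a.choose j * b.choose (m - j) * j.choose i
      = a.choose i * (a - i + b).choose (m - i) := by
  obtain ⟨r, rfl⟩ := Nat.exists_eq_add_of_le him
  have hlow : ∑ j ∈ range i, a.choose j * b.choose (i + r - j) * j.choose i = 0 :=
    sum_eq_zero fun j hj => by rw [choose_eq_zero_of_lt (mem_range.mp hj), Nat.mul_zero]
  rw [Nat.add_assoc, sum_range_add, hlow, Nat.zero_add, Nat.add_sub_cancel_left, add_choose_eq,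
    Finset.Nat.sum_antidiagonal_eq_sum_range_succ_mk, mul_sum]
  refine sum_congr rfl fun t _ => ?_
  rw [Nat.add_sub_add_left, Nat.mul_right_comm, choose_mul (Nat.le_add_right i t),
    Nat.add_sub_cancel_left, Nat.mul_assoc]

end Nat

section

variable {R : Type*} [CommSemiring R]

theorem one_add_pow_eq_sum_range {j m : ℕ} (hjm : j ≤ m) (y : R) :
    (1 + y) ^ j = ∑ i ∈ range (m + 1), y ^ i * j.choose i := by
  rw [add_comm, add_pow]
  simp only [one_pow, mul_one]
  exact sum_subset (range_subset_range.mpr (by omega)) fun i _ hi => by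
    rw [Nat.choose_eq_zero_of_lt (by simpa using hi), Nat.cast_zero, mul_zero]

theorem sum_range_choose_mul_choose_mul_one_add_pow (a b m : ℕ) (y : R) :
    ∑ j ∈ range (m + 1), (a.choose j * b.choose (m - j) : R) * (1 + y) ^ j
      = ∑ i ∈ range (m + 1), (a.choose i * (a - i + b).choose (m - i) : R) * y ^ i := by
  calc _ = ∑ j ∈ range (m + 1), ∑ i ∈ range (m + 1),
        (a.choose j * b.choose (m - j) * j.choose i : R) * y ^ i := by
        refine sum_congr rfl fun j hj => ?_
        rw [one_add_pow_eq_sum_range (mem_range_succ_iff.mp hj), mul_sum]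
        exact sum_congr rfl fun i _ => by ring
    _ = _ := by
        rw [sum_comm]
        refine sum_congr rfl fun i hi => ?_
        rw [← sum_mul]
        exact_mod_cast congrArg (fun c : ℕ => (c : R) * y ^ i)
          (Nat.sum_range_choose_mul_choose_mul_choose a b m i (mem_range_succ_iff.mp hi))

theorem sum_range_choose_mul_choose_mul_mul_pow (d b m : ℕ) (x : R) :
    ∑ k ∈ range (m + 2), (d.choose k * b.choose (m + 1 - k) : R) * (k * x ^ k)
      = d * x * ∑ j ∈ range (m + 1), ((d - 1).choose j * b.choose (m - j) : R) * x ^ j := by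
  rw [sum_range_succ', mul_sum]
  simp only [Nat.cast_zero, zero_mul, mul_zero, add_zero]
  refine sum_congr rfl fun j _ => ?_
  calc _ = (((j + 1) * d.choose (j + 1) : ℕ) : R) * b.choose (m - j) * x ^ j * x := by
        rw [Nat.add_sub_add_right, pow_succ]; push_cast; ring
    _ = _ := by rw [Nat.add_one_mul_choose_add_one]; push_cast; ring

end

section

variable {K : Type*} [Field K] [LinearOrder K] [IsStrictOrderedRing K]

/-- Unnormalised form of: the moment generating function of `Hypergeometric(N, D, m)` is dominated
by that of `Binomial(m, D / N)` on `[0, ∞)`. -/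
theorem sum_range_choose_mul_choose_mul_one_add_pow_le {N D : ℕ} (hDN : D ≤ N) (m : ℕ) {y : K}
    (hy : 0 ≤ y) :
    ∑ j ∈ range (m + 1), (D.choose j * (N - D).choose (m - j) : K) * (1 + y) ^ j
      ≤ N.choose m * (1 + y * (D / N)) ^ m := by
  rw [sum_range_choose_mul_choose_mul_one_add_pow, add_comm 1, add_pow, mul_sum]
  refine sum_le_sum fun i hi => ?_
  rcases lt_or_ge D i with hDi | hiD
  · rw [Nat.choose_eq_zero_of_lt hDi, Nat.cast_zero, zero_mul, zero_mul]
    positivity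
  have hchoose : (N.choose m * m.choose i : K) = N.choose i * (N - i).choose (m - i) := by
    exact_mod_cast Nat.choose_mul (mem_range_succ_iff.mp hi)
  rw [show D - i + (N - D) = N - i by omega, one_pow, mul_one, mul_pow]
  calc (D.choose i * (N - i).choose (m - i) : K) * y ^ i
      ≤ (N.choose i * (D / N) ^ i) * (N - i).choose (m - i) * y ^ i := by
        gcongr; exact Nat.choose_le_choose_mul_div_pow hDN i
    _ = _ := by linear_combination -((D / N : K) ^ i * y ^ i) * hchoose

theorem Nat.cast_sub_one_div_sub_one_le_div {d n : ℕ} (hdn : d ≤ n) :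
    ((d - 1 : ℕ) : K) / (n - 1 : ℕ) ≤ d / n := by
  obtain rfl | hd := d.eq_zero_or_pos
  · simp
  obtain rfl | hn := eq_or_lt_of_le (show 1 ≤ n by omega)
  · simp
  rw [div_le_div_iff₀ (by simpa using hn) (by positivity), Nat.cast_sub hd, Nat.cast_sub hn.le]
  push_cast
  nlinarith [(Nat.cast_le (α := K)).mpr hdn]

end

theorem hypergeometric_x_exp_expectation_le_general (n d s : ℕ)
    (hdn : d ≤ n) (hsn : s ≤ n) (ε : ℝ) (hε : 0 < ε) :
    ∑ k ∈ range (s + 1),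
        (((d.choose k : ℝ) * ((n - d).choose (s - k) : ℝ)) / (n.choose s : ℝ))
          * ((k : ℝ) * Real.exp (ε * k))
      ≤ Real.exp ε * ((d : ℝ) / n) * s
          * (1 + (Real.exp ε - 1) * ((d : ℝ) / n)) ^ (s - 1) := by
  obtain rfl | ⟨m, rfl⟩ : s = 0 ∨ ∃ m, s = m + 1 := by cases s <;> simp
  · simp
  set x := Real.exp ε
  have hx : 0 ≤ x - 1 := by linarith [Real.add_one_le_exp ε]
  have hC : (0 : ℝ) < n.choose (m + 1) := by exact_mod_cast Nat.choose_pos hsn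
  have hchoose : (n : ℝ) * (n - 1).choose m = (m + 1) * n.choose (m + 1) := by
    exact_mod_cast (Nat.add_one_mul_choose_add_one n m).symm
  calc _ = (∑ k ∈ range (m + 2), (d.choose k * (n - d).choose (m + 1 - k) : ℝ) * (k * x ^ k))
        / n.choose (m + 1) := by
        rw [sum_div]
        exact sum_congr rfl fun k _ => by rw [mul_comm ε, Real.exp_nat_mul]; ring
    _ = d * x * (∑ j ∈ range (m + 1), ((d - 1).choose j * (n - d).choose (m - j) : ℝ) * x ^ j)
        / n.choose (m + 1) := by rw [sum_range_choose_mul_choose_mul_mul_pow]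
    _ ≤ d * x * ((n - 1).choose m * (1 + (x - 1) * (d / n)) ^ m) / n.choose (m + 1) := by
        obtain rfl | hd := d.eq_zero_or_pos
        · simp
        have hbiased := sum_range_choose_mul_choose_mul_one_add_pow_le (K := ℝ) (N := n - 1)
          (D := d - 1) (by omega) m hx
        rw [add_sub_cancel, show n - 1 - (d - 1) = n - d by omega] at hbiased
        gcongr
        refine hbiased.trans ?_
        gcongr _ * (1 + _ * ?_) ^ _
        exact Nat.cast_sub_one_div_sub_one_le_div hdn
    _ = _ := by
        have hn0 : (n : ℝ) ≠ 0 := Nat.cast_ne_zero.mpr (by omega)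
        rw [Nat.add_sub_cancel]
        push_cast
        field_simp
        linear_combination d * x * hchoose

/-- for `Y ∼ Hypergeometric(n, d, s)` and `f(x) = x·e^{εx}`,
`E[f(Y)] ≤ e^ε·(d/n)·s·(1 + (e^ε − 1)·(d/n))^{s−1}`. -/
theorem hypergeometric_x_exp_expectation_le (n d s : ℕ) (hn : 0 < n)
    (hdn : d ≤ n) (hsn : s ≤ n) (ε : ℝ) (hε : 0 < ε) :
    ∑ k ∈ range (s + 1),
        (((d.choose k : ℝ) * ((n - d).choose (s - k) : ℝ)) / (n.choose s : ℝ))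
          * ((k : ℝ) * Real.exp (ε * k))
      ≤ Real.exp ε * ((d : ℝ) / n) * s
          * (1 + (Real.exp ε - 1) * ((d : ℝ) / n)) ^ (s - 1) :=
  hypergeometric_x_exp_expectation_le_general n d s hdn hsn ε hε
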